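/- The partial sum ∑_{n=1}^{ℓ} 2·Φ(n) is asymptotic to (6/π²)·ℓ² as ℓ → ∞, i.e., the ratio of the sum to (6/π²)ℓ² tends to 1. -/

import Mathlib

/-!
Möbius inversion of `∑_{d ∣ n} φ d = n` gives `φ = μ * id`, hence
`2 ∑_{n ≤ ℓ} φ n = ∑_{d ≤ ℓ} μ d ⌊ℓ/d⌋ (⌊ℓ/d⌋ + 1)`. After division by `ℓ²` the `d`-th term
tends to `μ d / d²` and is bounded by `2 / d²`, so by Tannery's theorem the sum tends to
`∑ μ d / d² = 1 / ζ(2) = 6 / π²`.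
-/

open Filter Real Finset Topology ArithmeticFunction
open scoped ArithmeticFunction.Moebius LSeries.notation

section

variable {R : Type*} [CommRing R]

theorem two_mul_sum_Ioc_natCast (k : ℕ) : 2 * ∑ m ∈ Ioc 0 k, (m : R) = k * (k + 1) := by
  induction k with
  | zero => simp
  | succ k ih =>
    rw [sum_Ioc_succ_top (Nat.zero_le k), mul_add, ih]
    push_cast
    ring

theorem moebius_mul_id_apply (n : ℕ) :
    ((μ : ArithmeticFunction R) * ↑ArithmeticFunction.id) n = n.totient := by
  rcases n.eq_zero_or_pos with rfl | hn
  · simp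
  simp only [mul_apply, intCoe_apply, natCoe_apply, id_apply]
  refine sum_eq_iff_sum_mul_moebius_eq (f := fun n => (n.totient : R)).mp
    (fun n _ => ?_) n hn
  rw [← Nat.cast_sum, Nat.sum_totient]

theorem two_mul_sum_totient_eq (N : ℕ) :
    2 * ∑ n ∈ Ioc 0 N, (n.totient : R) =
      ∑ d ∈ Ioc 0 N, (μ d : R) * ((N / d : ℕ) * ((N / d : ℕ) + 1)) := by
  simp_rw [← moebius_mul_id_apply, sum_Ioc_mul_eq_sum_sum, natCoe_apply, id_apply, intCoe_apply,
    mul_sum (s := Ioc 0 N)]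
  refine sum_congr rfl fun d _ => ?_
  rw [mul_left_comm, two_mul_sum_Ioc_natCast]

end

theorem tsum_moebius_div_sq : ∑' d : ℕ, (μ d : ℝ) / d ^ 2 = 6 / π ^ 2 := by
  have hs : 1 < (2 : ℂ).re := by norm_num
  have hL : LSeries (↗μ) 2 = 6 / (π : ℂ) ^ 2 := by
    have h := LSeries_zeta_mul_Lseries_moebius hs
    rw [LSeries_zeta_eq_riemannZeta hs, riemannZeta_two] at h
    rw [eq_div_iff (by exact_mod_cast (pow_pos pi_pos 2).ne')]
    linear_combination 6 * h
  have hterm (d : ℕ) : LSeries.term (↗μ) 2 d = ((μ d / d ^ 2 : ℝ) : ℂ) := by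
    rcases eq_or_ne d 0 with rfl | hd
    · simp
    · rw [LSeries.term_of_ne_zero hd, ← Nat.cast_ofNat, Complex.cpow_natCast]
      push_cast
      rfl
  apply Complex.ofReal_injective
  rw [Complex.ofReal_tsum, ← tsum_congr hterm]
  push_cast
  exact hL

theorem natCast_div_div_le_inv (ℓ d : ℕ) : ((ℓ / d : ℕ) : ℝ) / ℓ ≤ (d : ℝ)⁻¹ := by
  rcases eq_or_ne ℓ 0 with rfl | hℓ
  · simp
  calc ((ℓ / d : ℕ) : ℝ) / ℓ ≤ ((ℓ : ℝ) / d) / ℓ := by gcongr; exact Nat.cast_div_le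
    _ = (d : ℝ)⁻¹ := by field_simp

theorem tendsto_natCast_div_div_self (d : ℕ) :
    Tendsto (fun ℓ : ℕ => ((ℓ / d : ℕ) : ℝ) / ℓ) atTop (𝓝 (d : ℝ)⁻¹) := by
  rcases eq_or_ne d 0 with rfl | hd
  · simp
  have hfloor := (tendsto_nat_floor_div_atTop (R := ℝ)).comp
    (tendsto_natCast_atTop_atTop.atTop_div_const (by positivity : (0 : ℝ) < d))
  rw [← one_mul (d : ℝ)⁻¹]
  refine (hfloor.mul_const (d : ℝ)⁻¹).congr' ?_
  filter_upwards [eventually_ne_atTop 0] with ℓ hℓ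
  simp only [Function.comp_apply, Nat.floor_div_eq_div]
  field_simp

-- Since `ℓ / d = 0` for `d > ℓ` and `μ 0 = 0`, only `0 < d ≤ ℓ` contribute to `∑' d`.
noncomputable def totientSumTerm (ℓ d : ℕ) : ℝ := μ d * ((ℓ / d : ℕ) * ((ℓ / d : ℕ) + 1)) / ℓ ^ 2

theorem tsum_totientSumTerm (ℓ : ℕ) :
    ∑' d, totientSumTerm ℓ d = 2 * (∑ n ∈ Icc 1 ℓ, (n.totient : ℝ)) / ℓ ^ 2 := by
  have hsupp : ∀ d ∉ Ioc 0 ℓ, totientSumTerm ℓ d = 0 := by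
    intro d hd
    rcases Nat.eq_zero_or_pos d with rfl | hd0
    · simp [totientSumTerm]
    · simp [totientSumTerm, Nat.div_eq_of_lt (by simp_all : ℓ < d)]
  rw [tsum_eq_sum hsupp, show Icc 1 ℓ = Ioc 0 ℓ from rfl, two_mul_sum_totient_eq, sum_div]
  rfl

theorem tendsto_totientSumTerm (d : ℕ) :
    Tendsto (fun ℓ => totientSumTerm ℓ d) atTop (𝓝 ((μ d : ℝ) / d ^ 2)) := by
  have hq := tendsto_natCast_div_div_self d
  have h := (hq.mul (hq.add tendsto_inv_atTop_nhds_zero_nat)).const_mul (μ d : ℝ)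
  rw [add_zero, ← sq, inv_pow, ← div_eq_mul_inv] at h
  refine h.congr fun ℓ => ?_
  rw [totientSumTerm]
  ring

theorem norm_totientSumTerm_le (ℓ d : ℕ) : ‖totientSumTerm ℓ d‖ ≤ 2 / d ^ 2 := by
  have hμ : |(μ d : ℝ)| ≤ 1 := by exact_mod_cast abs_moebius_le_one
  have hq : ((ℓ / d : ℕ) : ℝ) * ((ℓ / d : ℕ) + 1) ≤ 2 * (ℓ / d : ℕ) ^ 2 := by
    rcases Nat.eq_zero_or_pos (ℓ / d) with h | h
    · simp [h]
    · have : (1 : ℝ) ≤ (ℓ / d : ℕ) := by exact_mod_cast h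
      nlinarith
  calc ‖totientSumTerm ℓ d‖ = |(μ d : ℝ)| * (((ℓ / d : ℕ) * ((ℓ / d : ℕ) + 1)) / ℓ ^ 2) := by
        rw [totientSumTerm, norm_div, norm_mul, Real.norm_eq_abs,
          Real.norm_of_nonneg (by positivity), Real.norm_of_nonneg (by positivity), mul_div_assoc]
    _ ≤ 1 * (2 * (((ℓ / d : ℕ) : ℝ) / ℓ) ^ 2) := by
        refine mul_le_mul hμ ?_ (by positivity) zero_le_one
        rw [div_pow, ← mul_div_assoc]
        gcongr
    _ ≤ 1 * (2 * (d : ℝ)⁻¹ ^ 2) := by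
        gcongr
        exact natCast_div_div_le_inv ℓ d
    _ = 2 / d ^ 2 := by ring

theorem tendsto_two_mul_sum_totient_div_sq :
    Tendsto (fun ℓ : ℕ => 2 * (∑ n ∈ Icc 1 ℓ, (n.totient : ℝ)) / ℓ ^ 2) atTop (𝓝 (6 / π ^ 2)) := by
  have hbound : Summable fun d : ℕ => 2 / (d : ℝ) ^ 2 := by
    simpa only [div_eq_mul_inv] using (Real.summable_nat_pow_inv.mpr one_lt_two).mul_left 2
  have h := tendsto_tsum_of_dominated_convergence hbound tendsto_totientSumTerm
    (Eventually.of_forall fun ℓ d => norm_totientSumTerm_le ℓ d)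
  rw [tsum_moebius_div_sq] at h
  simpa only [tsum_totientSumTerm] using h

theorem stmt_2 :
    Tendsto (fun ℓ : ℕ =>
        ((∑ n ∈ Finset.Icc 1 ℓ, 2 * Nat.totient n : ℕ) : ℝ) /
          ((6 / Real.pi ^ 2) * (ℓ : ℝ) ^ 2)) atTop (nhds 1) := by
  have hc : (6 / π ^ 2 : ℝ) ≠ 0 := by positivity
  have h := tendsto_two_mul_sum_totient_div_sq.div_const (6 / π ^ 2)
  rw [div_self hc] at h
  refine h.congr fun ℓ => ?_
  push_cast
  rw [← mul_sum, div_div, mul_comm (_ ^ 2)]
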